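/- Let K ∈ ℕ, h_0,…,h_K ∈ ℝ be filter coefficients with generalized frequency response h : ℝ^K → ℝ, let C_L > 0 and p ∈ [0,1]. If λ ∈ ℝ^K satisfies ‖∇_L h(λ, pλ)‖₂ ≤ C_L, then |h(λ) − h(pλ)| ≤ (1 − p) C_L ‖λ‖₂. -/

import Mathlib

open scoped RealInnerProductSpace

/-- The generalized frequency response `h(λ) = ∑_{k=0}^K h_k ∏_{κ=1}^k λ_κ`
of a graph filter with coefficients `h_0, …, h_K` (the empty product, for `k = 0`, is `1`). -/
noncomputable def genFreqResp (K : ℕ) (h : ℕ → ℝ) (lam : EuclideanSpace ℝ (Fin K)) : ℝ :=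
  ∑ k ∈ Finset.range (K + 1), h k * ∏ κ : Fin K, (if (κ : ℕ) < k then lam κ else 1)

/-- The vector `λ^{(k)}` whose first `k` entries (here: indices `κ ≤ k` in 0-indexed terms,
i.e. the first `k+1 ∈ {1,…,K}` entries for `k : Fin K`) come from `lam1` and whose remaining
entries come from `lam2`. -/
noncomputable def lipMix (K : ℕ) (lam1 lam2 : EuclideanSpace ℝ (Fin K)) (k : Fin K) :
    EuclideanSpace ℝ (Fin K) :=
  (WithLp.equiv 2 (Fin K → ℝ)).symm fun κ => if (κ : ℕ) ≤ (k : ℕ) then lam1 κ else lam2 κ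

/-- The Lipschitz gradient `∇_L h(λ₁, λ₂)`: its `k`-th entry is the partial derivative of the
generalized frequency response with respect to its `k`-th argument, evaluated at `λ^{(k)}`. -/
noncomputable def lipGrad (K : ℕ) (h : ℕ → ℝ) (lam1 lam2 : EuclideanSpace ℝ (Fin K)) :
    EuclideanSpace ℝ (Fin K) :=
  (WithLp.equiv 2 (Fin K → ℝ)).symm fun k =>
    deriv (fun t : ℝ => genFreqResp K h ((WithLp.equiv 2 (Fin K → ℝ)).symm (Function.update (lipMix K lam1 lam2 k) k t))) (lam1 k)

noncomputable def Dcoef (K : ℕ) (h : ℕ → ℝ) (v : EuclideanSpace ℝ (Fin K)) (k : Fin K) : ℝ :=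
  ∑ j ∈ Finset.range (K + 1),
    if (k : ℕ) < j then h j * ∏ κ ∈ Finset.univ.erase k, (if (κ : ℕ) < j then v κ else 1) else 0

noncomputable def Ecoef (K : ℕ) (h : ℕ → ℝ) (v : EuclideanSpace ℝ (Fin K)) (k : Fin K) : ℝ :=
  ∑ j ∈ Finset.range (K + 1),
    if (k : ℕ) < j then 0 else h j * ∏ κ ∈ Finset.univ.erase k, (if (κ : ℕ) < j then v κ else 1)

lemma genFreqResp_update (K : ℕ) (h : ℕ → ℝ) (v : EuclideanSpace ℝ (Fin K)) (k : Fin K)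
    (t : ℝ) : genFreqResp K h ((WithLp.equiv 2 (Fin K → ℝ)).symm (Function.update v k t)) = t * Dcoef K h v k + Ecoef K h v k := by
  unfold genFreqResp Dcoef Ecoef
  simp only [WithLp.equiv_symm_apply, PiLp.toLp_apply]
  rw [Finset.mul_sum, ← Finset.sum_add_distrib]
  refine Finset.sum_congr rfl fun j _ => ?_
  rw [← Finset.mul_prod_erase _ _ (Finset.mem_univ k)]
  have hup : ∀ κ ∈ Finset.univ.erase k,
      (if (κ : ℕ) < j then Function.update v k t κ else 1) =
      (if (κ : ℕ) < j then v κ else 1) := by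
    intro κ hκ
    simp [Function.update_of_ne (Finset.ne_of_mem_erase hκ)]
  rw [Finset.prod_congr rfl hup]
  by_cases hkj : (k : ℕ) < j <;> simp [hkj, Function.update_self] <;> ring

lemma deriv_genFreqResp_update (K : ℕ) (h : ℕ → ℝ) (v : EuclideanSpace ℝ (Fin K)) (k : Fin K)
    (x : ℝ) :
    deriv (fun t : ℝ => genFreqResp K h ((WithLp.equiv 2 (Fin K → ℝ)).symm (Function.update v k t))) x = Dcoef K h v k := by
  have heq : (fun t : ℝ => genFreqResp K h ((WithLp.equiv 2 (Fin K → ℝ)).symm (Function.update v k t))) =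
      fun t : ℝ => t * Dcoef K h v k + Ecoef K h v k := by
    funext t; exact genFreqResp_update K h v k t
  rw [heq]
  have := (((hasDerivAt_id x).mul_const (Dcoef K h v k)).add_const (Ecoef K h v k)).deriv
  simpa using this

/-- if `p ∈ [0,1]` and `‖∇_L h(λ, pλ)‖₂ ≤ C_L`, then
`|h(λ) − h(pλ)| ≤ (1 − p) C_L ‖λ‖₂`. -/
theorem abs_genFreqResp_sub_smul_le_of_lipGrad_norm_le (K : ℕ) (h : ℕ → ℝ) (CL : ℝ)
    (hCL : 0 < CL) (p : ℝ) (hp : p ∈ Set.Icc (0 : ℝ) 1) (lam : EuclideanSpace ℝ (Fin K))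
    (hgrad : ‖lipGrad K h lam (p • lam)‖ ≤ CL) :
    |genFreqResp K h lam - genFreqResp K h (p • lam)| ≤ (1 - p) * CL * ‖lam‖ := by
  obtain ⟨hp0, hp1⟩ := hp
  set g := lipGrad K h lam (p • lam) with hg
  -- the interpolating sequence
  set G : ℕ → EuclideanSpace ℝ (Fin K) := fun n =>
    (WithLp.equiv 2 (Fin K → ℝ)).symm fun κ => if (κ : ℕ) < n then lam κ else p * lam κ with hGdef
  have hGapp : ∀ (n : ℕ) (κ : Fin K), G n κ = if (κ : ℕ) < n then lam κ else p * lam κ :=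
    fun _ _ => rfl
  have hMix : ∀ (k κ : Fin K),
      lipMix K lam (p • lam) k κ = if (κ : ℕ) ≤ (k : ℕ) then lam κ else p * lam κ :=
    fun _ _ => rfl
  have hsmul : ∀ κ : Fin K, (p • lam) κ = p * lam κ := fun κ => rfl
  have hG0 : G 0 = p • lam := by
    ext κ; rw [hGapp, hsmul]; simp
  have hGK : G K = lam := by
    ext κ; rw [hGapp]; simp [κ.isLt]
  have key : ∀ k : Fin K,
      genFreqResp K h (G ((k : ℕ) + 1)) - genFreqResp K h (G (k : ℕ)) =
      (1 - p) * (lam k * g k) := by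
    intro k
    have h1 : G ((k : ℕ) + 1) = (WithLp.equiv 2 (Fin K → ℝ)).symm (Function.update (lipMix K lam (p • lam) k) k (lam k)) := by
      ext κ
      simp only [WithLp.equiv_symm_apply, PiLp.toLp_apply]
      by_cases hκ : κ = k
      · subst hκ; rw [hGapp, Function.update_self]; simp
      · rw [hGapp, Function.update_of_ne hκ, hMix]
        simp [Nat.lt_succ_iff]
    have h2 : G (k : ℕ) = (WithLp.equiv 2 (Fin K → ℝ)).symm (Function.update (lipMix K lam (p • lam) k) k (p * lam k)) := by
      ext κ
      simp only [WithLp.equiv_symm_apply, PiLp.toLp_apply]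
      by_cases hκ : κ = k
      · subst hκ; rw [hGapp, Function.update_self]; simp
      · have hne : (κ : ℕ) ≠ (k : ℕ) := fun hc => hκ (Fin.ext hc)
        rw [hGapp, Function.update_of_ne hκ, hMix]
        have hiff : ((κ : ℕ) < (k : ℕ)) ↔ ((κ : ℕ) ≤ (k : ℕ)) := by omega
        simp only [hiff]
    have hgk : g k = Dcoef K h (lipMix K lam (p • lam) k) k := by
      rw [hg]
      show deriv (fun t : ℝ =>
        genFreqResp K h ((WithLp.equiv 2 (Fin K → ℝ)).symm (Function.update (lipMix K lam (p • lam) k) k t))) (lam k) = _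
      exact deriv_genFreqResp_update K h _ k _
    rw [h1, h2, genFreqResp_update, genFreqResp_update, hgk]
    ring
  have tele0 : genFreqResp K h (G K) - genFreqResp K h (G 0) =
      ∑ k : Fin K, (1 - p) * (lam k * g k) := by
    rw [← Finset.sum_range_sub (fun n => genFreqResp K h (G n)) K,
      ← Fin.sum_univ_eq_sum_range (fun n => genFreqResp K h (G (n + 1)) - genFreqResp K h (G n)) K]
    exact Finset.sum_congr rfl fun k _ => key k
  rw [hGK, hG0] at tele0
  have inner_eq : (∑ k : Fin K, lam k * g k) = ⟪lam, g⟫ := by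
    rw [PiLp.inner_apply]
    refine Finset.sum_congr rfl fun k _ => ?_
    simp [RCLike.inner_apply]
    ring
  have h1p : (0 : ℝ) ≤ 1 - p := by linarith
  calc |genFreqResp K h lam - genFreqResp K h (p • lam)|
      = (1 - p) * |⟪lam, g⟫| := by
        rw [tele0, ← Finset.mul_sum, inner_eq, abs_mul, abs_of_nonneg h1p]
    _ ≤ (1 - p) * (‖lam‖ * ‖g‖) :=
        mul_le_mul_of_nonneg_left (abs_real_inner_le_norm lam g) h1p
    _ ≤ (1 - p) * CL * ‖lam‖ := by
        nlinarith [mul_le_mul_of_nonneg_left hgrad (mul_nonneg h1p (norm_nonneg lam)),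
          norm_nonneg lam, norm_nonneg g]
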